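/- (Example 1.) Let a, p1, p2, q1, q2 ∈ ℝ and A = [[a1,a2],[a3,a4]] be such that the 3×3 block matrix M = [[a, (p1,p2)],[(q1,q2)ᵀ, A]] is invertible with inverse N = [[b, (r1,r2)],[(s1,s2)ᵀ, B]], B = [[b1,b2],[b3,b4]]. Suppose u', v', w', z' : ℝ² → ℝ are smooth functions of (x',t') satisfying the linear auxiliary system w'_{x'} = u', w'_{t'} = u'_{x'}, z'_{x'} = v', z'_{t'} = v'_{x'}. Suppose the map Ψ : ℝ² → ℝ², Ψ(x',t') = (b·x' + r1·w'(x',t') + r2·z'(x',t'), t'), is a bijection with smooth inverse, and define smooth w, z : ℝ² → ℝ by w(Ψ(x',t')) = s1·x' + b1·w' + b2·z' and z(Ψ(x',t')) = s2·x' + b3·w' + b4·z'; set u = w_x, v = z_x and assume p1·u + p2·v + a vanishes nowhere. Then (u,v,w,z) satisfies the nonlinear second-generation potential system w_x = u, w_t = u_x/(p1·u + p2·v + a)², z_x = v, z_t = v_x/(p1·u + p2·v + a)²; consequently u and v satisfy the nonlinear diffusion system u_t = ∂_x[u_x/(p1·u + p2·v + a)²], v_t = ∂_x[v_x/(p1·u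 + p2·v + a)²]. -/

import Mathlib

open Matrix

/-- Partial derivative with respect to the first variable `x`. -/
noncomputable def pdx (f : ℝ × ℝ → ℝ) : ℝ × ℝ → ℝ :=
  fun p => deriv (fun x => f (x, p.2)) p.1

/-- Partial derivative with respect to the second variable `t`. -/
noncomputable def pdt (f : ℝ × ℝ → ℝ) : ℝ × ℝ → ℝ :=
  fun p => deriv (fun t => f (p.1, t)) p.2

section Helpers

variable {F : Type*} [NormedAddCommGroup F] [NormedSpace ℝ F]

lemma sliceX_hasDerivAt {f : ℝ × ℝ → F} {p : ℝ × ℝ} (hf : DifferentiableAt ℝ f p) :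
    HasDerivAt (fun x => f (x, p.2)) (fderiv ℝ f p (1, 0)) p.1 := by
  have hg : HasDerivAt (fun x : ℝ => (x, p.2)) ((1 : ℝ), (0 : ℝ)) p.1 :=
    (hasDerivAt_id p.1).prodMk (hasDerivAt_const p.1 p.2)
  have hfd : HasFDerivAt f (fderiv ℝ f p) ((fun x : ℝ => (x, p.2)) p.1) := by
    simpa using hf.hasFDerivAt
  simpa [Function.comp_def] using hfd.comp_hasDerivAt p.1 hg

lemma sliceT_hasDerivAt {f : ℝ × ℝ → F} {p : ℝ × ℝ} (hf : DifferentiableAt ℝ f p) :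
    HasDerivAt (fun t => f (p.1, t)) (fderiv ℝ f p (0, 1)) p.2 := by
  have hg : HasDerivAt (fun t : ℝ => (p.1, t)) ((0 : ℝ), (1 : ℝ)) p.2 :=
    (hasDerivAt_const p.2 p.1).prodMk (hasDerivAt_id p.2)
  have hfd : HasFDerivAt f (fderiv ℝ f p) ((fun t : ℝ => (p.1, t)) p.2) := by
    simpa using hf.hasFDerivAt
  simpa [Function.comp_def] using hfd.comp_hasDerivAt p.2 hg

end Helpers

lemma pdx_eq_fderiv {f : ℝ × ℝ → ℝ} {p : ℝ × ℝ} (hf : DifferentiableAt ℝ f p) :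
    pdx f p = fderiv ℝ f p (1, 0) := (sliceX_hasDerivAt hf).deriv

lemma pdt_eq_fderiv {f : ℝ × ℝ → ℝ} {p : ℝ × ℝ} (hf : DifferentiableAt ℝ f p) :
    pdt f p = fderiv ℝ f p (0, 1) := (sliceT_hasDerivAt hf).deriv

lemma pdx_hasDerivAt {f : ℝ × ℝ → ℝ} {p : ℝ × ℝ} (hf : DifferentiableAt ℝ f p) :
    HasDerivAt (fun x => f (x, p.2)) (pdx f p) p.1 := by
  rw [pdx_eq_fderiv hf]; exact sliceX_hasDerivAt hf

lemma pdt_hasDerivAt {f : ℝ × ℝ → ℝ} {p : ℝ × ℝ} (hf : DifferentiableAt ℝ f p) :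
    HasDerivAt (fun t => f (p.1, t)) (pdt f p) p.2 := by
  rw [pdt_eq_fderiv hf]; exact sliceT_hasDerivAt hf

lemma pdx_smooth {f : ℝ × ℝ → ℝ} (hf : ContDiff ℝ (⊤ : ℕ∞) f) : ContDiff ℝ (⊤ : ℕ∞) (pdx f) := by
  have h1 : ContDiff ℝ (⊤ : ℕ∞) (fderiv ℝ f) := hf.fderiv_right (by simp)
  have h2 : ContDiff ℝ (⊤ : ℕ∞) (fun p => fderiv ℝ f p ((1 : ℝ), (0 : ℝ))) :=
    h1.clm_apply contDiff_const
  have : pdx f = fun p => fderiv ℝ f p ((1 : ℝ), (0 : ℝ)) := by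
    funext p; exact pdx_eq_fderiv (hf.differentiable (by simp) p)
  rw [this]; exact h2

lemma pdt_pdx_comm {f : ℝ × ℝ → ℝ} (hf : ContDiff ℝ (⊤ : ℕ∞) f) (p : ℝ × ℝ) :
    pdt (pdx f) p = pdx (pdt f) p := by
  have hdiff : Differentiable ℝ f := hf.differentiable (by simp)
  have hf' : ContDiff ℝ (⊤ : ℕ∞) (fderiv ℝ f) := hf.fderiv_right (by simp)
  have hf'd : DifferentiableAt ℝ (fderiv ℝ f) p := (hf'.differentiable (by simp)) p
  have hsymm := second_derivative_symmetric (f := f) (f' := fderiv ℝ f)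
    (f'' := fderiv ℝ (fderiv ℝ f) p) (fun y => (hdiff y).hasFDerivAt)
    hf'd.hasFDerivAt (1, 0) (0, 1)
  have hx : pdx f = fun q => fderiv ℝ f q ((1:ℝ), (0:ℝ)) := by
    funext q; exact pdx_eq_fderiv (hdiff q)
  have ht : pdt f = fun q => fderiv ℝ f q ((0:ℝ), (1:ℝ)) := by
    funext q; exact pdt_eq_fderiv (hdiff q)
  have hL : ∀ (vv : ℝ × ℝ),
      HasDerivAt (fun t => fderiv ℝ f (p.1, t) vv)
        (fderiv ℝ (fderiv ℝ f) p (0, 1) vv) p.2 := by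
    intro vv
    have h1 : HasDerivAt (fun t => fderiv ℝ f (p.1, t))
        (fderiv ℝ (fderiv ℝ f) p (0, 1)) p.2 := sliceT_hasDerivAt hf'd
    simpa using h1.clm_apply (hasDerivAt_const p.2 vv)
  have hR : ∀ (vv : ℝ × ℝ),
      HasDerivAt (fun x => fderiv ℝ f (x, p.2) vv)
        (fderiv ℝ (fderiv ℝ f) p (1, 0) vv) p.1 := by
    intro vv
    have h1 : HasDerivAt (fun x => fderiv ℝ f (x, p.2))
        (fderiv ℝ (fderiv ℝ f) p (1, 0)) p.1 := sliceX_hasDerivAt hf'd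
    simpa using h1.clm_apply (hasDerivAt_const p.1 vv)
  rw [hx, ht]
  show deriv (fun t => fderiv ℝ f (p.1, t) (1, 0)) p.2
      = deriv (fun x => fderiv ℝ f (x, p.2) (0, 1)) p.1
  rw [(hL (1, 0)).deriv, (hR (0, 1)).deriv]
  exact hsymm.symm

lemma compX {f : ℝ × ℝ → ℝ} {X : ℝ → ℝ} {x0 t0 d : ℝ}
    (hf : DifferentiableAt ℝ f (X x0, t0)) (hX : HasDerivAt X d x0) :
    HasDerivAt (fun x => f (X x, t0)) (d * pdx f (X x0, t0)) x0 := by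
  have hc : HasDerivAt (fun x => (X x, t0)) ((d, 0) : ℝ × ℝ) x0 :=
    hX.prodMk (hasDerivAt_const x0 t0)
  have h1 := hf.hasFDerivAt.comp_hasDerivAt_of_eq x0 hc rfl
  have hval : fderiv ℝ f (X x0, t0) (d, 0) = d * pdx f (X x0, t0) := by
    have h2 : ((d, (0 : ℝ)) : ℝ × ℝ) = d • ((1 : ℝ), (0 : ℝ)) := by simp
    rw [pdx_eq_fderiv hf, h2, ContinuousLinearMap.map_smul, smul_eq_mul]
  rw [hval] at h1
  simpa [Function.comp_def] using h1

lemma compT {f : ℝ × ℝ → ℝ} {Y : ℝ → ℝ} {t0 d : ℝ}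
    (hf : DifferentiableAt ℝ f (Y t0, t0)) (hY : HasDerivAt Y d t0) :
    HasDerivAt (fun t => f (Y t, t)) (d * pdx f (Y t0, t0) + pdt f (Y t0, t0)) t0 := by
  have hc : HasDerivAt (fun t => (Y t, t)) ((d, 1) : ℝ × ℝ) t0 :=
    hY.prodMk (hasDerivAt_id t0)
  have h1 := hf.hasFDerivAt.comp_hasDerivAt_of_eq t0 hc rfl
  have hval : fderiv ℝ f (Y t0, t0) (d, 1)
      = d * pdx f (Y t0, t0) + pdt f (Y t0, t0) := by
    have h2 : ((d, (1 : ℝ)) : ℝ × ℝ) = d • ((1 : ℝ), (0 : ℝ)) + ((0 : ℝ), (1 : ℝ)) := by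
      simp
    rw [pdx_eq_fderiv hf, pdt_eq_fderiv hf, h2, map_add, ContinuousLinearMap.map_smul, smul_eq_mul]
  rw [hval] at h1
  simpa [Function.comp_def] using h1

/-- Example 1: every smooth solution of the linear auxiliary system
`w'_{x'} = u'`, `w'_{t'} = u'_{x'}`, `z'_{x'} = v'`, `z'_{t'} = v'_{x'}`, transported by the
inverse transformation `x = b·x' + r1·w' + r2·z'`, `t = t'`, `w = s1·x' + b1·w' + b2·z'`,
`z = s2·x' + b3·w' + b4·z'`, yields a solution of the nonlinear second-generation potential
system `w_x = u`, `w_t = u_x/(p1·u + p2·v + a)²`, `z_x = v`, `z_t = v_x/(p1·u + p2·v + a)²`;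
consequently `u, v` solve `u_t = ∂_x[u_x/(p1·u + p2·v + a)²]`,
`v_t = ∂_x[v_x/(p1·u + p2·v + a)²]`. -/
theorem example1_linearizing_mapping
    (a p1 p2 q1 q2 b r1 r2 s1 s2 a1 a2 a3 a4 b1 b2 b3 b4 : ℝ)
    (M N : Matrix (Fin 3) (Fin 3) ℝ)
    (hM : M = !![a, p1, p2; q1, a1, a2; q2, a3, a4])
    (hN : N = !![b, r1, r2; s1, b1, b2; s2, b3, b4])
    (hMN : M * N = 1) (hNM : N * M = 1)
    (u' v' w' z' : ℝ × ℝ → ℝ)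
    (hu' : ContDiff ℝ (⊤ : ℕ∞) u') (hv' : ContDiff ℝ (⊤ : ℕ∞) v')
    (hw' : ContDiff ℝ (⊤ : ℕ∞) w') (hz' : ContDiff ℝ (⊤ : ℕ∞) z')
    (heq1 : ∀ p : ℝ × ℝ, pdx w' p = u' p)
    (heq2 : ∀ p : ℝ × ℝ, pdt w' p = pdx u' p)
    (heq3 : ∀ p : ℝ × ℝ, pdx z' p = v' p)
    (heq4 : ∀ p : ℝ × ℝ, pdt z' p = pdx v' p)
    (Ψ : ℝ × ℝ → ℝ × ℝ)
    (hΨ : Ψ = fun p => (b * p.1 + r1 * w' p + r2 * z' p, p.2))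
    (Ψinv : ℝ × ℝ → ℝ × ℝ)
    (hl : Function.LeftInverse Ψinv Ψ) (hr : Function.RightInverse Ψinv Ψ)
    (hΨinv : ContDiff ℝ (⊤ : ℕ∞) Ψinv)
    (w z : ℝ × ℝ → ℝ) (hws : ContDiff ℝ (⊤ : ℕ∞) w) (hzs : ContDiff ℝ (⊤ : ℕ∞) z)
    (hwdef : ∀ p : ℝ × ℝ, w (Ψ p) = s1 * p.1 + b1 * w' p + b2 * z' p)
    (hzdef : ∀ p : ℝ × ℝ, z (Ψ p) = s2 * p.1 + b3 * w' p + b4 * z' p)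
    (u v : ℝ × ℝ → ℝ) (hu : u = pdx w) (hv : v = pdx z)
    (hden : ∀ p : ℝ × ℝ, p1 * u p + p2 * v p + a ≠ 0) :
    (∀ p : ℝ × ℝ, pdx w p = u p) ∧
    (∀ p : ℝ × ℝ, pdt w p = pdx u p / (p1 * u p + p2 * v p + a) ^ 2) ∧
    (∀ p : ℝ × ℝ, pdx z p = v p) ∧
    (∀ p : ℝ × ℝ, pdt z p = pdx v p / (p1 * u p + p2 * v p + a) ^ 2) ∧
    (∀ p : ℝ × ℝ, pdt u p =
      pdx (fun q => pdx u q / (p1 * u q + p2 * v q + a) ^ 2) p) ∧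
    (∀ p : ℝ × ℝ, pdt v p =
      pdx (fun q => pdx v q / (p1 * u q + p2 * v q + a) ^ 2) p) := by
  subst hu hv
  -- matrix identities from the first row of M·N = 1
  have h00 : a * b + p1 * s1 + p2 * s2 = 1 := by
    have := congrFun (congrFun hMN 0) 0
    simp [hM, hN, Matrix.mul_apply, Fin.sum_univ_three, Matrix.one_apply] at this
    linarith
  have h01 : a * r1 + p1 * b1 + p2 * b3 = 0 := by
    have := congrFun (congrFun hMN 0) 1
    simp [hM, hN, Matrix.mul_apply, Fin.sum_univ_three, Matrix.one_apply] at this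
    linarith
  have h02 : a * r2 + p1 * b2 + p2 * b4 = 0 := by
    have := congrFun (congrFun hMN 0) 2
    simp [hM, hN, Matrix.mul_apply, Fin.sum_univ_three, Matrix.one_apply] at this
    linarith
  -- basic differentiability
  have hdw' : Differentiable ℝ w' := hw'.differentiable (by simp)
  have hdz' : Differentiable ℝ z' := hz'.differentiable (by simp)
  have hdw : Differentiable ℝ w := hws.differentiable (by simp)
  have hdz : Differentiable ℝ z := hzs.differentiable (by simp)
  have hdpw : Differentiable ℝ (pdx w) := (pdx_smooth hws).differentiable (by simp)
  have hdpz : Differentiable ℝ (pdx z) := (pdx_smooth hzs).differentiable (by simp)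
  -- pointwise form of Ψ
  have hΨp : ∀ x0 t0 : ℝ, Ψ (x0, t0)
      = (b * x0 + r1 * w' (x0, t0) + r2 * z' (x0, t0), t0) := by
    intro x0 t0; rw [hΨ]
  -- derivatives of affine combinations of w', z' in x
  have haff : ∀ (c0 c1 c2 x0 t0 : ℝ),
      HasDerivAt (fun x => c0 * x + c1 * w' (x, t0) + c2 * z' (x, t0))
        (c0 + c1 * u' (x0, t0) + c2 * v' (x0, t0)) x0 := by
    intro c0 c1 c2 x0 t0
    have h1 : HasDerivAt (fun x : ℝ => c0 * x) c0 x0 := by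
      simpa using (hasDerivAt_id x0).const_mul c0
    have h2 : HasDerivAt (fun x => w' (x, t0)) (u' (x0, t0)) x0 := by
      have := pdx_hasDerivAt (p := (x0, t0)) (hdw' (x0, t0))
      rwa [heq1 (x0, t0)] at this
    have h3 : HasDerivAt (fun x => z' (x, t0)) (v' (x0, t0)) x0 := by
      have := pdx_hasDerivAt (p := (x0, t0)) (hdz' (x0, t0))
      rwa [heq3 (x0, t0)] at this
    exact (h1.add (h2.const_mul c1)).add (h3.const_mul c2)
  -- derivatives of affine combinations of w', z' in t
  have hafft : ∀ (c0 c1 c2 x0 t0 : ℝ),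
      HasDerivAt (fun t => c0 * x0 + c1 * w' (x0, t) + c2 * z' (x0, t))
        (c1 * pdx u' (x0, t0) + c2 * pdx v' (x0, t0)) t0 := by
    intro c0 c1 c2 x0 t0
    have h1 : HasDerivAt (fun _ : ℝ => c0 * x0) 0 t0 := hasDerivAt_const t0 (c0 * x0)
    have h2 : HasDerivAt (fun t => w' (x0, t)) (pdx u' (x0, t0)) t0 := by
      have := pdt_hasDerivAt (p := (x0, t0)) (hdw' (x0, t0))
      rwa [heq2 (x0, t0)] at this
    have h3 : HasDerivAt (fun t => z' (x0, t)) (pdx v' (x0, t0)) t0 := by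
      have := pdt_hasDerivAt (p := (x0, t0)) (hdz' (x0, t0))
      rwa [heq4 (x0, t0)] at this
    have := (h1.add (h2.const_mul c1)).add (h3.const_mul c2)
    simpa [Pi.add_def] using this
  -- the Jacobian factor never vanishes
  have hD0 : ∀ p : ℝ × ℝ, b + r1 * u' p + r2 * v' p ≠ 0 := by
    rintro ⟨x0, t0⟩
    have hφ : ContDiff ℝ (⊤ : ℕ∞) (fun q : ℝ × ℝ => (Ψinv q).1) := contDiff_fst.comp hΨinv
    have h1 : HasDerivAt (fun x => (fun q : ℝ × ℝ => (Ψinv q).1)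
          (b * x + r1 * w' (x, t0) + r2 * z' (x, t0), t0))
        ((b + r1 * u' (x0, t0) + r2 * v' (x0, t0)) *
          pdx (fun q : ℝ × ℝ => (Ψinv q).1)
            (b * x0 + r1 * w' (x0, t0) + r2 * z' (x0, t0), t0)) x0 :=
      compX (hφ.differentiable (by simp) _) (haff b r1 r2 x0 t0)
    have hfun : (fun x => (fun q : ℝ × ℝ => (Ψinv q).1)
          (b * x + r1 * w' (x, t0) + r2 * z' (x, t0), t0)) = fun x => x := by
      funext x
      have := congrArg Prod.fst (hl (x, t0))
      simpa [hΨp] using this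
    rw [hfun] at h1
    have h2 : HasDerivAt (fun x : ℝ => x) 1 x0 := hasDerivAt_id x0
    exact left_ne_zero_of_mul_eq_one (h1.unique h2)
  -- first slope equation for w
  have hE1 : ∀ p : ℝ × ℝ, pdx w (Ψ p) * (b + r1 * u' p + r2 * v' p)
      = s1 + b1 * u' p + b2 * v' p := by
    rintro ⟨x0, t0⟩
    have h1 : HasDerivAt (fun x => w
          (b * x + r1 * w' (x, t0) + r2 * z' (x, t0), t0))
        ((b + r1 * u' (x0, t0) + r2 * v' (x0, t0)) *
          pdx w (b * x0 + r1 * w' (x0, t0) + r2 * z' (x0, t0), t0)) x0 :=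
      compX (hdw _) (haff b r1 r2 x0 t0)
    have hfun : (fun x => w (b * x + r1 * w' (x, t0) + r2 * z' (x, t0), t0))
        = fun x => s1 * x + b1 * w' (x, t0) + b2 * z' (x, t0) := by
      funext x
      have := hwdef (x, t0)
      rwa [hΨp] at this
    rw [hfun] at h1
    have := h1.unique (haff s1 b1 b2 x0 t0)
    rw [hΨp]
    linarith [this]
  -- first slope equation for z
  have hE2 : ∀ p : ℝ × ℝ, pdx z (Ψ p) * (b + r1 * u' p + r2 * v' p)
      = s2 + b3 * u' p + b4 * v' p := by
    rintro ⟨x0, t0⟩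
    have h1 : HasDerivAt (fun x => z
          (b * x + r1 * w' (x, t0) + r2 * z' (x, t0), t0))
        ((b + r1 * u' (x0, t0) + r2 * v' (x0, t0)) *
          pdx z (b * x0 + r1 * w' (x0, t0) + r2 * z' (x0, t0), t0)) x0 :=
      compX (hdz _) (haff b r1 r2 x0 t0)
    have hfun : (fun x => z (b * x + r1 * w' (x, t0) + r2 * z' (x, t0), t0))
        = fun x => s2 * x + b3 * w' (x, t0) + b4 * z' (x, t0) := by
      funext x
      have := hzdef (x, t0)
      rwa [hΨp] at this
    rw [hfun] at h1
    have := h1.unique (haff s2 b3 b4 x0 t0)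
    rw [hΨp]
    linarith [this]
  -- the transformed denominator
  have hDen : ∀ p : ℝ × ℝ,
      (p1 * pdx w (Ψ p) + p2 * pdx z (Ψ p) + a) * (b + r1 * u' p + r2 * v' p) = 1 := by
    intro p
    linear_combination p1 * hE1 p + p2 * hE2 p + h00 + u' p * h01 + v' p * h02
  -- the time derivative of w
  have hWt : ∀ p : ℝ × ℝ, pdt w (Ψ p)
      = b1 * pdx u' p + b2 * pdx v' p
        - (r1 * pdx u' p + r2 * pdx v' p) * pdx w (Ψ p) := by
    rintro ⟨x0, t0⟩
    have h1 : HasDerivAt (fun t => w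
          (b * x0 + r1 * w' (x0, t) + r2 * z' (x0, t), t))
        ((r1 * pdx u' (x0, t0) + r2 * pdx v' (x0, t0)) *
            pdx w (b * x0 + r1 * w' (x0, t0) + r2 * z' (x0, t0), t0)
          + pdt w (b * x0 + r1 * w' (x0, t0) + r2 * z' (x0, t0), t0)) t0 :=
      compT (hdw _) (hafft b r1 r2 x0 t0)
    have hfun : (fun t => w (b * x0 + r1 * w' (x0, t) + r2 * z' (x0, t), t))
        = fun t => s1 * x0 + b1 * w' (x0, t) + b2 * z' (x0, t) := by
      funext t
      have := hwdef (x0, t)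
      rwa [hΨp] at this
    rw [hfun] at h1
    have := h1.unique (hafft s1 b1 b2 x0 t0)
    rw [hΨp]
    linarith [this]
  -- the time derivative of z
  have hZt : ∀ p : ℝ × ℝ, pdt z (Ψ p)
      = b3 * pdx u' p + b4 * pdx v' p
        - (r1 * pdx u' p + r2 * pdx v' p) * pdx z (Ψ p) := by
    rintro ⟨x0, t0⟩
    have h1 : HasDerivAt (fun t => z
          (b * x0 + r1 * w' (x0, t) + r2 * z' (x0, t), t))
        ((r1 * pdx u' (x0, t0) + r2 * pdx v' (x0, t0)) *
            pdx z (b * x0 + r1 * w' (x0, t0) + r2 * z' (x0, t0), t0)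
          + pdt z (b * x0 + r1 * w' (x0, t0) + r2 * z' (x0, t0), t0)) t0 :=
      compT (hdz _) (hafft b r1 r2 x0 t0)
    have hfun : (fun t => z (b * x0 + r1 * w' (x0, t) + r2 * z' (x0, t), t))
        = fun t => s2 * x0 + b3 * w' (x0, t) + b4 * z' (x0, t) := by
      funext t
      have := hzdef (x0, t)
      rwa [hΨp] at this
    rw [hfun] at h1
    have := h1.unique (hafft s2 b3 b4 x0 t0)
    rw [hΨp]
    linarith [this]
  -- x-derivative of pdx w along Ψ
  have hUx : ∀ p : ℝ × ℝ, pdx (pdx w) (Ψ p) * (b + r1 * u' p + r2 * v' p) ^ 3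
      = (b1 * pdx u' p + b2 * pdx v' p) * (b + r1 * u' p + r2 * v' p)
        - (s1 + b1 * u' p + b2 * v' p) * (r1 * pdx u' p + r2 * pdx v' p) := by
    rintro ⟨x0, t0⟩
    have h1 : HasDerivAt (fun x => pdx w
          (b * x + r1 * w' (x, t0) + r2 * z' (x, t0), t0))
        ((b + r1 * u' (x0, t0) + r2 * v' (x0, t0)) *
          pdx (pdx w) (b * x0 + r1 * w' (x0, t0) + r2 * z' (x0, t0), t0)) x0 :=
      compX (hdpw _) (haff b r1 r2 x0 t0)
    have hq : HasDerivAt (fun x =>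
          (s1 + b1 * u' (x, t0) + b2 * v' (x, t0)) /
            (b + r1 * u' (x, t0) + r2 * v' (x, t0)))
        (((b1 * pdx u' (x0, t0) + b2 * pdx v' (x0, t0)) *
            (b + r1 * u' (x0, t0) + r2 * v' (x0, t0))
          - (s1 + b1 * u' (x0, t0) + b2 * v' (x0, t0)) *
            (r1 * pdx u' (x0, t0) + r2 * pdx v' (x0, t0))) /
          (b + r1 * u' (x0, t0) + r2 * v' (x0, t0)) ^ 2) x0 := by
      have hnum : HasDerivAt (fun x : ℝ => s1 + b1 * u' (x, t0) + b2 * v' (x, t0))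
          (b1 * pdx u' (x0, t0) + b2 * pdx v' (x0, t0)) x0 := by
        have h2 : HasDerivAt (fun x => u' (x, t0)) (pdx u' (x0, t0)) x0 :=
          pdx_hasDerivAt (p := (x0, t0)) ((hu'.differentiable (by simp)) (x0, t0))
        have h3 : HasDerivAt (fun x => v' (x, t0)) (pdx v' (x0, t0)) x0 :=
          pdx_hasDerivAt (p := (x0, t0)) ((hv'.differentiable (by simp)) (x0, t0))
        have := ((hasDerivAt_const x0 s1).add (h2.const_mul b1)).add (h3.const_mul b2)
        simpa [Pi.add_def] using this
      have hdenom : HasDerivAt (fun x : ℝ => b + r1 * u' (x, t0) + r2 * v' (x, t0))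
          (r1 * pdx u' (x0, t0) + r2 * pdx v' (x0, t0)) x0 := by
        have h2 : HasDerivAt (fun x => u' (x, t0)) (pdx u' (x0, t0)) x0 :=
          pdx_hasDerivAt (p := (x0, t0)) ((hu'.differentiable (by simp)) (x0, t0))
        have h3 : HasDerivAt (fun x => v' (x, t0)) (pdx v' (x0, t0)) x0 :=
          pdx_hasDerivAt (p := (x0, t0)) ((hv'.differentiable (by simp)) (x0, t0))
        have := ((hasDerivAt_const x0 b).add (h2.const_mul r1)).add (h3.const_mul r2)
        simpa [Pi.add_def] using this
      exact hnum.div hdenom (hD0 (x0, t0))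
    have hfun : (fun x => pdx w (b * x + r1 * w' (x, t0) + r2 * z' (x, t0), t0))
        = fun x => (s1 + b1 * u' (x, t0) + b2 * v' (x, t0)) /
            (b + r1 * u' (x, t0) + r2 * v' (x, t0)) := by
      funext x
      have h1 := hE1 (x, t0)
      rw [hΨp] at h1
      field_simp [hD0 (x, t0)]
      linarith [h1]
    rw [hfun] at h1
    have huneq := h1.unique hq
    rw [hΨp]
    have hd := hD0 (x0, t0)
    field_simp at huneq
    linear_combination huneq
  -- x-derivative of pdx z along Ψ
  have hVx : ∀ p : ℝ × ℝ, pdx (pdx z) (Ψ p) * (b + r1 * u' p + r2 * v' p) ^ 3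
      = (b3 * pdx u' p + b4 * pdx v' p) * (b + r1 * u' p + r2 * v' p)
        - (s2 + b3 * u' p + b4 * v' p) * (r1 * pdx u' p + r2 * pdx v' p) := by
    rintro ⟨x0, t0⟩
    have h1 : HasDerivAt (fun x => pdx z
          (b * x + r1 * w' (x, t0) + r2 * z' (x, t0), t0))
        ((b + r1 * u' (x0, t0) + r2 * v' (x0, t0)) *
          pdx (pdx z) (b * x0 + r1 * w' (x0, t0) + r2 * z' (x0, t0), t0)) x0 :=
      compX (hdpz _) (haff b r1 r2 x0 t0)
    have hq : HasDerivAt (fun x =>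
          (s2 + b3 * u' (x, t0) + b4 * v' (x, t0)) /
            (b + r1 * u' (x, t0) + r2 * v' (x, t0)))
        (((b3 * pdx u' (x0, t0) + b4 * pdx v' (x0, t0)) *
            (b + r1 * u' (x0, t0) + r2 * v' (x0, t0))
          - (s2 + b3 * u' (x0, t0) + b4 * v' (x0, t0)) *
            (r1 * pdx u' (x0, t0) + r2 * pdx v' (x0, t0))) /
          (b + r1 * u' (x0, t0) + r2 * v' (x0, t0)) ^ 2) x0 := by
      have hnum : HasDerivAt (fun x : ℝ => s2 + b3 * u' (x, t0) + b4 * v' (x, t0))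
          (b3 * pdx u' (x0, t0) + b4 * pdx v' (x0, t0)) x0 := by
        have h2 : HasDerivAt (fun x => u' (x, t0)) (pdx u' (x0, t0)) x0 :=
          pdx_hasDerivAt (p := (x0, t0)) ((hu'.differentiable (by simp)) (x0, t0))
        have h3 : HasDerivAt (fun x => v' (x, t0)) (pdx v' (x0, t0)) x0 :=
          pdx_hasDerivAt (p := (x0, t0)) ((hv'.differentiable (by simp)) (x0, t0))
        have := ((hasDerivAt_const x0 s2).add (h2.const_mul b3)).add (h3.const_mul b4)
        simpa [Pi.add_def] using this
      have hdenom : HasDerivAt (fun x : ℝ => b + r1 * u' (x, t0) + r2 * v' (x, t0))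
          (r1 * pdx u' (x0, t0) + r2 * pdx v' (x0, t0)) x0 := by
        have h2 : HasDerivAt (fun x => u' (x, t0)) (pdx u' (x0, t0)) x0 :=
          pdx_hasDerivAt (p := (x0, t0)) ((hu'.differentiable (by simp)) (x0, t0))
        have h3 : HasDerivAt (fun x => v' (x, t0)) (pdx v' (x0, t0)) x0 :=
          pdx_hasDerivAt (p := (x0, t0)) ((hv'.differentiable (by simp)) (x0, t0))
        have := ((hasDerivAt_const x0 b).add (h2.const_mul r1)).add (h3.const_mul r2)
        simpa [Pi.add_def] using this
      exact hnum.div hdenom (hD0 (x0, t0))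
    have hfun : (fun x => pdx z (b * x + r1 * w' (x, t0) + r2 * z' (x, t0), t0))
        = fun x => (s2 + b3 * u' (x, t0) + b4 * v' (x, t0)) /
            (b + r1 * u' (x, t0) + r2 * v' (x, t0)) := by
      funext x
      have h1 := hE2 (x, t0)
      rw [hΨp] at h1
      field_simp [hD0 (x, t0)]
      linarith [h1]
    rw [hfun] at h1
    have huneq := h1.unique hq
    rw [hΨp]
    have hd := hD0 (x0, t0)
    field_simp at huneq
    linear_combination huneq
  -- second potential equation for w, at transformed points
  have main2 : ∀ p : ℝ × ℝ, pdt w (Ψ p)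
      = pdx (pdx w) (Ψ p) / (p1 * pdx w (Ψ p) + p2 * pdx z (Ψ p) + a) ^ 2 := by
    intro p
    have hd1 : (b + r1 * u' p + r2 * v' p) ≠ 0 := hD0 p
    have hd2 : p1 * pdx w (Ψ p) + p2 * pdx z (Ψ p) + a ≠ 0 := hden (Ψ p)
    have h2 : pdx (pdx w) (Ψ p) * (b + r1 * u' p + r2 * v' p) ^ 3
        = pdt w (Ψ p) * (b + r1 * u' p + r2 * v' p) := by
      linear_combination hUx p + (r1 * pdx u' p + r2 * pdx v' p) * hE1 p
        - (b + r1 * u' p + r2 * v' p) * hWt p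
    rw [eq_div_iff (pow_ne_zero _ hd2)]
    have h3 : pdx (pdx w) (Ψ p) * (b + r1 * u' p + r2 * v' p) ^ 2 = pdt w (Ψ p) := by
      have := mul_right_cancel₀ hd1 (show
        (pdx (pdx w) (Ψ p) * (b + r1 * u' p + r2 * v' p) ^ 2) * (b + r1 * u' p + r2 * v' p)
          = pdt w (Ψ p) * (b + r1 * u' p + r2 * v' p) by linear_combination h2)
      exact this
    linear_combination pdx (pdx w) (Ψ p) *
        ((p1 * pdx w (Ψ p) + p2 * pdx z (Ψ p) + a) * (b + r1 * u' p + r2 * v' p) + 1)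
        * hDen p - (p1 * pdx w (Ψ p) + p2 * pdx z (Ψ p) + a) ^ 2 * h3
  -- second potential equation for z, at transformed points
  have main4 : ∀ p : ℝ × ℝ, pdt z (Ψ p)
      = pdx (pdx z) (Ψ p) / (p1 * pdx w (Ψ p) + p2 * pdx z (Ψ p) + a) ^ 2 := by
    intro p
    have hd1 : (b + r1 * u' p + r2 * v' p) ≠ 0 := hD0 p
    have hd2 : p1 * pdx w (Ψ p) + p2 * pdx z (Ψ p) + a ≠ 0 := hden (Ψ p)
    have h2 : pdx (pdx z) (Ψ p) * (b + r1 * u' p + r2 * v' p) ^ 3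
        = pdt z (Ψ p) * (b + r1 * u' p + r2 * v' p) := by
      linear_combination hVx p + (r1 * pdx u' p + r2 * pdx v' p) * hE2 p
        - (b + r1 * u' p + r2 * v' p) * hZt p
    rw [eq_div_iff (pow_ne_zero _ hd2)]
    have h3 : pdx (pdx z) (Ψ p) * (b + r1 * u' p + r2 * v' p) ^ 2 = pdt z (Ψ p) := by
      have := mul_right_cancel₀ hd1 (show
        (pdx (pdx z) (Ψ p) * (b + r1 * u' p + r2 * v' p) ^ 2) * (b + r1 * u' p + r2 * v' p)
          = pdt z (Ψ p) * (b + r1 * u' p + r2 * v' p) by linear_combination h2)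
      exact this
    linear_combination pdx (pdx z) (Ψ p) *
        ((p1 * pdx w (Ψ p) + p2 * pdx z (Ψ p) + a) * (b + r1 * u' p + r2 * v' p) + 1)
        * hDen p - (p1 * pdx w (Ψ p) + p2 * pdx z (Ψ p) + a) ^ 2 * h3
  -- transport to all points
  have e2 : ∀ q : ℝ × ℝ, pdt w q
      = pdx (pdx w) q / (p1 * pdx w q + p2 * pdx z q + a) ^ 2 := by
    intro q
    have := main2 (Ψinv q)
    rwa [hr q] at this
  have e4 : ∀ q : ℝ × ℝ, pdt z q
      = pdx (pdx z) q / (p1 * pdx w q + p2 * pdx z q + a) ^ 2 := by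
    intro q
    have := main4 (Ψinv q)
    rwa [hr q] at this
  refine ⟨fun _ => rfl, e2, fun _ => rfl, e4, ?_, ?_⟩
  · intro q
    have hfun : pdt w = fun q => pdx (pdx w) q /
        (p1 * pdx w q + p2 * pdx z q + a) ^ 2 := funext e2
    calc pdt (pdx w) q = pdx (pdt w) q := pdt_pdx_comm hws q
      _ = pdx (fun q => pdx (pdx w) q /
            (p1 * pdx w q + p2 * pdx z q + a) ^ 2) q := by rw [hfun]
  · intro q
    have hfun : pdt z = fun q => pdx (pdx z) q /
        (p1 * pdx w q + p2 * pdx z q + a) ^ 2 := funext e4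
    calc pdt (pdx z) q = pdx (pdt z) q := pdt_pdx_comm hzs q
      _ = pdx (fun q => pdx (pdx z) q /
            (p1 * pdx w q + p2 * pdx z q + a) ^ 2) q := by rw [hfun]
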